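/- arXiv:1502.05370 — 5 statements merged into one kernel-verified Lean document; each statement's English description precedes it below -/
import Mathlib

section
/- Let a > 0 and b > 0 (the signal and noise variances α⁻¹ and β⁻¹), set τ = a/b, let P ≥ 1 and m ≥ 0 (m = ‖μ‖₂²), and let δ₁' = (m/a)·(1 + 1/τ). Then τ₁ := √((P + δ₁')/2)·(1 − (P·log(1+τ) + m/a)/(τ·(P + δ₁'))) is strictly positive. -/
open Real

/-- positivity of
τ₁ = √((P+δ₁')/2)·(1 − (P·log(1+τ) + m/a)/(τ·(P+δ₁'))), with
δ₁' = (m/a)(1+1/τ), τ = a/b, a = α⁻¹ > 0, b = β⁻¹ > 0, P ≥ 1, m = ‖μ‖₂² ≥ 0. -/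
theorem stmt_9 (a b : ℝ) (ha : 0 < a) (hb : 0 < b) (P : ℕ) (hP : 1 ≤ P)
    (m : ℝ) (hm : 0 ≤ m) :
    0 < Real.sqrt (((P : ℝ) + (m / a) * (1 + 1 / (a / b))) / 2) *
      (1 - ((P : ℝ) * Real.log (1 + a / b) + m / a) /
        ((a / b) * ((P : ℝ) + (m / a) * (1 + 1 / (a / b))))) := by
  set τ := a / b with hτdef
  have hτ : 0 < τ := div_pos ha hb
  have hPpos : (0:ℝ) < (P : ℝ) := by exact_mod_cast Nat.lt_of_lt_of_le Nat.zero_lt_one hP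
  have hma : 0 ≤ m / a := div_nonneg hm ha.le
  have hδ : 0 ≤ (m / a) * (1 + 1 / τ) :=
    mul_nonneg hma (by positivity)
  have hD : 0 < (P : ℝ) + (m / a) * (1 + 1 / τ) := by linarith
  apply mul_pos
  · exact Real.sqrt_pos.mpr (by linarith)
  · have hlog : Real.log (1 + τ) < τ := by
      have := Real.add_one_le_exp τ
      have h1 : Real.log (1 + τ) ≤ τ := by
        rw [add_comm]
        exact Real.log_le_sub_one_of_pos (by linarith) |>.trans (by linarith)
      rcases lt_or_eq_of_le h1 with h | h
      · exact h
      · exfalso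
        have : Real.exp (Real.log (1 + τ)) = 1 + τ :=
          Real.exp_log (by linarith)
        rw [h] at this
        have := Real.add_one_lt_exp (ne_of_gt hτ)
        linarith
    have hnum : (P : ℝ) * Real.log (1 + τ) + m / a < τ * ((P : ℝ) + (m / a) * (1 + 1 / τ)) := by
      have h1 : (P : ℝ) * Real.log (1 + τ) < (P : ℝ) * τ :=
        mul_lt_mul_of_pos_left hlog hPpos
      have h2 : m / a ≤ τ * ((m / a) * (1 + 1 / τ)) := by
        have : τ * ((m / a) * (1 + 1 / τ)) = (m / a) * (τ + 1) := by
          field_simp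
        rw [this]
        nlinarith
      nlinarith
    have hden : 0 < τ * ((P : ℝ) + (m / a) * (1 + 1 / τ)) := mul_pos hτ hD
    have := (div_lt_one hden).mpr hnum
    linarith
end

section
/- Let φ be an M×P real matrix with φφᵀ positive definite, μ ∈ ℝ^P, σ² > 0, real constants P_b and κ, and t := P_t·κ² ≥ 0. Set q := μᵀP̂μ where P̂ = φᵀ(φφᵀ)⁻¹φ, and let Σ̃₁ := σ²·φφᵀ + t·(φμ)(φμ)ᵀ. Then the modified deflection coefficient of the falsified data satisfies ((1−P_bκ)·φμ)ᵀ · Σ̃₁⁻¹ · ((1−P_bκ)·φμ) = (1−P_bκ)²·q/σ² − t·(1−P_bκ)²·q²/(σ²·(σ² + t·q)) (equivalently, = (1−P_bκ)²·q/(σ² + t·q)). -/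
open Matrix

lemma vmv_mulVec {n m : ℕ} (a : Fin m → ℝ) (b x : Fin n → ℝ) :
    (vecMulVec a b) *ᵥ x = (b ⬝ᵥ x) • a := by
  ext i
  simp only [vecMulVec, mulVec, dotProduct, Pi.smul_apply, smul_eq_mul, of_apply]
  rw [Finset.sum_mul]
  exact Finset.sum_congr rfl fun k _ => by ring

lemma mul_vmv {n m : ℕ} (Mx : Matrix (Fin m) (Fin m) ℝ) (a : Fin m → ℝ) (b : Fin n → ℝ) :
    Mx * vecMulVec a b = vecMulVec (Mx *ᵥ a) b := by
  ext i j
  simp only [vecMulVec, mul_apply, mulVec, dotProduct, of_apply]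
  rw [Finset.sum_mul]
  exact Finset.sum_congr rfl fun k _ => by ring

lemma vmv_mul {n m : ℕ} (a : Fin m → ℝ) (b : Fin n → ℝ) (Mx : Matrix (Fin n) (Fin n) ℝ) :
    vecMulVec a b * Mx = vecMulVec a (b ᵥ* Mx) := by
  ext i j
  simp [vecMulVec, mul_apply, vecMul, dotProduct, Finset.mul_sum, mul_assoc]

lemma vmv_mul_vmv {n m : ℕ} (a : Fin m → ℝ) (b x : Fin n → ℝ) (y : Fin n → ℝ) :
    vecMulVec a b * vecMulVec x y = (b ⬝ᵥ x) • vecMulVec a y := by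
  ext i j
  simp [vecMulVec, mul_apply, dotProduct, Finset.sum_mul, Finset.mul_sum]
  congr 1; ext k; ring

/-- closed form of the modified deflection coefficient of the
falsified data. With q = μᵀP̂μ, P̂ = φᵀ(φφᵀ)⁻¹φ, and
Σ̃₁ = σ²φφᵀ + t(φμ)(φμ)ᵀ (t = P_tκ² ≥ 0),
((1−P_bκ)φμ)ᵀ Σ̃₁⁻¹ ((1−P_bκ)φμ) = (1−P_bκ)²q/σ² − t(1−P_bκ)²q²/(σ²(σ²+tq)). -/
theorem stmt_12 {M P : ℕ} (φ : Matrix (Fin M) (Fin P) ℝ)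
    (hφ : (φ * φᵀ).PosDef) (μ : Fin P → ℝ)
    (σ2 : ℝ) (hσ2 : 0 < σ2) (Pb κ : ℝ) (t : ℝ) (ht : 0 ≤ t) :
    let Phat : Matrix (Fin P) (Fin P) ℝ := φᵀ * (φ * φᵀ)⁻¹ * φ
    let q : ℝ := μ ⬝ᵥ Phat.mulVec μ
    let Sig1 : Matrix (Fin M) (Fin M) ℝ :=
      σ2 • (φ * φᵀ) + t • vecMulVec (φ.mulVec μ) (φ.mulVec μ)
    ((1 - Pb * κ) • φ.mulVec μ) ⬝ᵥ Sig1⁻¹.mulVec ((1 - Pb * κ) • φ.mulVec μ) =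
      (1 - Pb * κ) ^ 2 * q / σ2 -
        t * (1 - Pb * κ) ^ 2 * q ^ 2 / (σ2 * (σ2 + t * q)) := by
  intro Phat q Sig1
  set D : Matrix (Fin M) (Fin M) ℝ := φ * φᵀ with hD
  set C : Matrix (Fin M) (Fin M) ℝ := D⁻¹ with hC
  set v : Fin M → ℝ := φ *ᵥ μ with hv
  clear_value D C v
  have hdet : IsUnit D.det := isUnit_iff_ne_zero.2 hφ.det_pos.ne'
  have hDC : D * C = 1 := by rw [hC]; exact mul_nonsing_inv _ hdet
  have hCD : C * D = 1 := by rw [hC]; exact nonsing_inv_mul _ hdet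
  have hDsymm : Dᵀ = D := by rw [hD, transpose_mul, transpose_transpose]
  have hCsymm : Cᵀ = C := by rw [hC, transpose_nonsing_inv, hDsymm]
  have hq : q = v ⬝ᵥ C *ᵥ v := by
    simp only [q, Phat, hv, hC, hD, ← mulVec_mulVec]
    rw [dotProduct_mulVec μ φᵀ, vecMul_transpose]
  have hq0 : 0 ≤ q := by
    rw [hq]
    have := (hφ.inv).posSemidef.dotProduct_mulVec_nonneg v
    simpa [← hC] using this
  have hden : σ2 + t * q ≠ 0 := by positivity
  set c : ℝ := t / (σ2 * (σ2 + t * q)) with hc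
  set B : Matrix (Fin M) (Fin M) ℝ :=
    σ2⁻¹ • C - c • vecMulVec (C *ᵥ v) (C *ᵥ v) with hB
  have hvC : v ᵥ* C = C *ᵥ v := by rw [← hCsymm, vecMul_transpose, hCsymm]
  have hq' : v ⬝ᵥ C *ᵥ v = q := hq.symm
  have hq'' : (C *ᵥ v) ⬝ᵥ v = q := by rw [dotProduct_comm, hq']
  have hinv : Sig1⁻¹ = B := by
    apply inv_eq_right_inv
    have expand : Sig1 * B =
        (σ2 * σ2⁻¹) • (D * C) + (t * σ2⁻¹) • (vecMulVec v v * C)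
          - (σ2 * c) • (D * vecMulVec (C *ᵥ v) (C *ᵥ v))
          - (t * c) • (vecMulVec v v * vecMulVec (C *ᵥ v) (C *ᵥ v)) := by
      simp only [Sig1, hB, ← hD, ← hv, Matrix.add_mul, Matrix.mul_sub, Matrix.smul_mul,
        Matrix.mul_smul, smul_smul, smul_add, smul_sub]
      module
    rw [expand, vmv_mul, hvC, mul_vmv, mulVec_mulVec, hDC, one_mulVec,
      vmv_mul_vmv, hq', smul_smul]
    have hcoef : t * σ2⁻¹ - σ2 * c - t * c * q = 0 := by
      rw [hc]; field_simp; ring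
    have : (t * σ2⁻¹) • vecMulVec v (C *ᵥ v) - (σ2 * c) • vecMulVec v (C *ᵥ v)
        - (t * c * q) • vecMulVec v (C *ᵥ v)
        = (t * σ2⁻¹ - σ2 * c - t * c * q) • vecMulVec v (C *ᵥ v) := by
      rw [← sub_smul, ← sub_smul]
    rw [mul_inv_cancel₀ hσ2.ne', one_smul]
    calc 1 + (t * σ2⁻¹) • vecMulVec v (C *ᵥ v) - (σ2 * c) • vecMulVec v (C *ᵥ v)
          - (t * c * q) • vecMulVec v (C *ᵥ v)
        = 1 + ((t * σ2⁻¹) • vecMulVec v (C *ᵥ v) - (σ2 * c) • vecMulVec v (C *ᵥ v)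
          - (t * c * q) • vecMulVec v (C *ᵥ v)) := by abel
      _ = 1 := by rw [this, hcoef, zero_smul, add_zero]
  rw [hinv, hB, sub_mulVec, smul_mulVec, smul_mulVec, vmv_mulVec]
  simp only [mulVec_smul, smul_dotProduct, dotProduct_smul, dotProduct_sub, smul_eq_mul, hq', hq'']
  rw [hc]
  field_simp
end

section
/- Let D > 0, P_t > 0, and P_b ≠ 0 satisfy the high-SNR condition D·P_t/P_b² > 1. Then the function f(α) := α·(1 − 1/α)² / (P_t/(α²·P_b²) + 1/D) + (1 − α)·D is strictly decreasing on the interval (0, 1]. -/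
/-- Proposition 5: in the high-SNR regime D·P_t/P_b² > 1, the
perfect-secrecy deflection coefficient
f(α) = α(1−1/α)²/(P_t/(α²P_b²) + 1/D) + (1−α)D is strictly decreasing
on (0, 1]. -/
theorem stmt_16 (D : ℝ) (hD : 0 < D) (Pt : ℝ) (hPt : 0 < Pt)
    (Pb : ℝ) (hPb : Pb ≠ 0) (hSNR : D * Pt / Pb ^ 2 > 1) :
    StrictAntiOn
      (fun α : ℝ =>
        α * (1 - 1 / α) ^ 2 / (Pt / (α ^ 2 * Pb ^ 2) + 1 / D) + (1 - α) * D)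
      (Set.Ioc 0 1) := by
  set k : ℝ := D * Pt / Pb ^ 2 with hk
  have hPb2 : (0:ℝ) < Pb ^ 2 := by positivity
  have hk1 : 1 < k := hSNR
  have key : ∀ α ∈ Set.Ioc (0:ℝ) 1,
      α * (1 - 1 / α) ^ 2 / (Pt / (α ^ 2 * Pb ^ 2) + 1 / D) + (1 - α) * D
        = D * ((1 - α) * (k + α)) / (k + α ^ 2) := by
    intro α hα
    have hα0 : (0:ℝ) < α := hα.1
    have hden : (0:ℝ) < Pt / (α ^ 2 * Pb ^ 2) + 1 / D := by positivity
    have hden2 : (0:ℝ) < k + α ^ 2 := by positivity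
    rw [hk]
    field_simp
    ring
  intro x hx y hy hxy
  simp only [key x hx, key y hy]
  have hkx : (0:ℝ) < k + x ^ 2 := by nlinarith [sq_nonneg x]
  have hky : (0:ℝ) < k + y ^ 2 := by nlinarith [sq_nonneg y]
  rw [div_lt_div_iff₀ hky hkx]
  have hx0 : 0 < x := hx.1
  have hy0 : 0 < y := hy.1
  have hx1 : x ≤ 1 := hx.2
  have hy1 : y ≤ 1 := hy.2
  have h1 : 0 < y - x := by linarith
  have h2 : 0 < k - x * y := by nlinarith
  nlinarith [mul_pos hD (mul_pos h1 (mul_pos (sub_pos.2 hk1) h2)),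
    mul_pos hD (mul_pos h1 (mul_pos (mul_pos (by linarith : (0:ℝ) < 2*k) (by linarith : (0:ℝ) < x + y)) (by norm_num : (0:ℝ) < 1))),
    mul_pos hD (mul_pos h1 (mul_pos (sub_pos.2 hk1) (by linarith : (0:ℝ) < k)))]
end

section
/- Let α ∈ (0,1), c > 0, m > 0, P_t > 0, and P_b ≠ 0. Then the function h(s) := α·(1 − 1/α)² / (P_t/(α²·P_b²) + s/(c·m)) + (1 − α)·c·m/s is strictly decreasing on (0, ∞). Consequently, since σ² = α⁻¹ + β⁻¹ + γ⁻¹ is strictly increasing in the artificial noise variance γ⁻¹, the FC's deflection coefficient under the perfect secrecy constraint is strictly decreasing in γ⁻¹, and hence is maximized by deterministic artificial noise (γ⁻¹ = 0), i.e., Wᵢ ≡ μ/(α·P_b). -/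
/-- Proposition 6: the function
h(s) = α(1−1/α)²/(P_t/(α²P_b²) + s/(cm)) + (1−α)cm/s is strictly decreasing on
(0,∞); consequently, since σ² = α⁻¹+β⁻¹+γ⁻¹ is strictly increasing in the
artificial noise variance γ⁻¹, the FC's deflection coefficient under the
perfect secrecy constraint is strictly decreasing in γ⁻¹ and is maximized by
deterministic artificial noise (γ⁻¹ = 0). -/
theorem stmt_18 (α : ℝ) (hα : α ∈ Set.Ioo (0 : ℝ) 1) (c : ℝ) (hc : 0 < c)
    (m : ℝ) (hm : 0 < m) (Pt : ℝ) (hPt : 0 < Pt) (Pb : ℝ) (hPb : Pb ≠ 0) :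
    StrictAntiOn
      (fun s : ℝ =>
        α * (1 - 1 / α) ^ 2 / (Pt / (α ^ 2 * Pb ^ 2) + s / (c * m)) +
          (1 - α) * c * m / s)
      (Set.Ioi 0) ∧
    (∀ ainv binv : ℝ, 0 < ainv → 0 < binv →
      StrictAntiOn
        (fun ginv : ℝ =>
          α * (1 - 1 / α) ^ 2 /
              (Pt / (α ^ 2 * Pb ^ 2) + (ainv + binv + ginv) / (c * m)) +
            (1 - α) * c * m / (ainv + binv + ginv))
        (Set.Ici 0)) := by
  obtain ⟨hα0, hα1⟩ := hα
  have hcm : 0 < c * m := mul_pos hc hm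
  have hA : 0 < α * (1 - 1 / α) ^ 2 := by
    have hlt : 1 < 1 / α := (one_lt_div hα0).mpr hα1
    have h1 : 1 - 1 / α ≠ 0 := by linarith
    positivity
  have hB : 0 < Pt / (α ^ 2 * Pb ^ 2) := by positivity
  have hC : 0 < (1 - α) * c * m := by
    have : 0 < 1 - α := by linarith
    positivity
  have main : StrictAntiOn
      (fun s : ℝ =>
        α * (1 - 1 / α) ^ 2 / (Pt / (α ^ 2 * Pb ^ 2) + s / (c * m)) +
          (1 - α) * c * m / s)
      (Set.Ioi 0) := by
    intro x hx y hy hxy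
    simp only [Set.mem_Ioi] at hx hy
    have hdx : 0 < Pt / (α ^ 2 * Pb ^ 2) + x / (c * m) := by positivity
    have hdy : 0 < Pt / (α ^ 2 * Pb ^ 2) + y / (c * m) := by positivity
    have h1 : α * (1 - 1 / α) ^ 2 / (Pt / (α ^ 2 * Pb ^ 2) + y / (c * m)) <
        α * (1 - 1 / α) ^ 2 / (Pt / (α ^ 2 * Pb ^ 2) + x / (c * m)) := by
      apply div_lt_div_of_pos_left hA hdx
      have : x / (c * m) < y / (c * m) := by
        exact div_lt_div_of_pos_right hxy hcm
      linarith
    have h2 : (1 - α) * c * m / y < (1 - α) * c * m / x :=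
      div_lt_div_of_pos_left hC hx hxy
    dsimp only
    linarith
  refine ⟨main, fun ainv binv ha hb => ?_⟩
  intro x hx y hy hxy
  simp only [Set.mem_Ici] at hx hy
  have hx' : ainv + binv + x ∈ Set.Ioi (0 : ℝ) := by
    simp only [Set.mem_Ioi]; linarith
  have hy' : ainv + binv + y ∈ Set.Ioi (0 : ℝ) := by
    simp only [Set.mem_Ioi]; linarith
  exact main hx' hy' (by linarith)
end

section
/- Let σ² > 0, m > 0, P_t > 0, P_b ≠ 0, c_max ∈ (0, 1], and α_min ∈ (0, 1], and suppose the high-SNR condition c_max·m/σ² > P_b²/P_t holds. Define, for c ∈ (0, c_max] and α ∈ (0, 1], F(c, α) := α·(1 − 1/α)² / (P_t/(α²·P_b²) + σ²/(c·m)) + (1 − α)·c·m/σ². Then for every c ∈ (0, c_max] and every α ∈ [α_min, 1], F(c, α) ≤ F(c_max, α_min); i.e., under the perfect secrecy constraint the FC's deflection coefficient is maximized by choosing the largest admissible compression ratio c = c_max and the smallest admissible fraction of noise-injecting nodes α = α_min. -/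
private lemma aux_mono (b T : ℝ) (hb : 0 < b) (hT : b < T) (β α : ℝ)
    (hβ : 0 < β) (hβα : β ≤ α) (hα : α ≤ 1) :
    (1 - α) * (T + α * b) / (T + α ^ 2 * b) ≤
      (1 - β) * (T + β * b) / (T + β ^ 2 * b) := by
  have hα0 : 0 < α := lt_of_lt_of_le hβ hβα
  have hT0 : 0 < T := lt_trans hb hT
  have hd1 : 0 < T + α ^ 2 * b := by positivity
  have hd2 : 0 < T + β ^ 2 * b := by positivity
  rw [div_le_div_iff₀ hd1 hd2]
  nlinarith [mul_nonneg (sub_nonneg.2 hβα) (mul_pos (sub_pos.2 hT) (lt_trans hb hT)).le,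
    mul_nonneg (sub_nonneg.2 hβα) (mul_nonneg (mul_nonneg hβ.le (mul_pos hb hb).le) hα0.le),
    mul_nonneg (sub_nonneg.2 hβα)
      (mul_nonneg (mul_nonneg hb.le (lt_trans hb hT).le)
        (by nlinarith : (0:ℝ) ≤ 2 * α + 2 * β - α * β))]

/-- Theorem 4: under the perfect secrecy constraint, in the
high-SNR regime c_max·m/σ² > P_b²/P_t, the FC's deflection coefficient
F(c,α) = α(1−1/α)²/(P_t/(α²P_b²) + σ²/(cm)) + (1−α)cm/σ² is maximized over
c ∈ (0, c_max] and α ∈ [α_min, 1] at (c_max, α_min). -/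
theorem stmt_19 (σ2 : ℝ) (hσ2 : 0 < σ2) (m : ℝ) (hm : 0 < m)
    (Pt : ℝ) (hPt : 0 < Pt) (Pb : ℝ) (hPb : Pb ≠ 0)
    (cmax : ℝ) (hcmax : cmax ∈ Set.Ioc (0 : ℝ) 1)
    (αmin : ℝ) (hαmin : αmin ∈ Set.Ioc (0 : ℝ) 1)
    (hSNR : cmax * m / σ2 > Pb ^ 2 / Pt) :
    ∀ c ∈ Set.Ioc (0 : ℝ) cmax, ∀ α ∈ Set.Icc αmin 1,
      α * (1 - 1 / α) ^ 2 / (Pt / (α ^ 2 * Pb ^ 2) + σ2 / (c * m)) +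
          (1 - α) * c * m / σ2 ≤
        αmin * (1 - 1 / αmin) ^ 2 /
            (Pt / (αmin ^ 2 * Pb ^ 2) + σ2 / (cmax * m)) +
          (1 - αmin) * cmax * m / σ2 := by
  obtain ⟨hc0, hc1⟩ := hcmax
  obtain ⟨hb0, hb1⟩ := hαmin
  intro c hc α hα
  obtain ⟨hcpos, hcle⟩ := hc
  obtain ⟨hαlo, hαhi⟩ := hα
  have hαpos : 0 < α := lt_of_lt_of_le hb0 hαlo
  have hPb2 : 0 < Pb ^ 2 := by positivity
  set s : ℝ := cmax * m / σ2 with hs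
  have hspos : 0 < s := by positivity
  set T : ℝ := Pt * s with hT
  have hTb : Pb ^ 2 < T := by
    have := (div_lt_iff₀ hPt).mp hSNR
    nlinarith
  -- rewrite F(cmax, γ) in closed form
  have hrw : ∀ γ : ℝ, 0 < γ →
      γ * (1 - 1 / γ) ^ 2 / (Pt / (γ ^ 2 * Pb ^ 2) + σ2 / (cmax * m)) +
        (1 - γ) * cmax * m / σ2 =
      s * ((1 - γ) * (T + γ * Pb ^ 2) / (T + γ ^ 2 * Pb ^ 2)) := by
    intro γ hγ
    have h1 : T + γ ^ 2 * Pb ^ 2 ≠ 0 := by positivity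
    have h2 : Pt * (cmax * m) + σ2 * (γ ^ 2 * Pb ^ 2) ≠ 0 := by positivity
    rw [hT, hs] at h1 ⊢
    field_simp
    ring
  -- Step 1: monotone in c
  have step1 : α * (1 - 1 / α) ^ 2 / (Pt / (α ^ 2 * Pb ^ 2) + σ2 / (c * m)) +
      (1 - α) * c * m / σ2 ≤
      α * (1 - 1 / α) ^ 2 / (Pt / (α ^ 2 * Pb ^ 2) + σ2 / (cmax * m)) +
      (1 - α) * cmax * m / σ2 := by
    have hnum : 0 ≤ α * (1 - 1 / α) ^ 2 := by positivity
    have hden2 : 0 < Pt / (α ^ 2 * Pb ^ 2) + σ2 / (cmax * m) := by positivity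
    have hdle : Pt / (α ^ 2 * Pb ^ 2) + σ2 / (cmax * m) ≤
        Pt / (α ^ 2 * Pb ^ 2) + σ2 / (c * m) := by
      have : σ2 / (cmax * m) ≤ σ2 / (c * m) := by
        apply div_le_div_of_nonneg_left hσ2.le (by positivity)
        nlinarith
      linarith
    have h1 : α * (1 - 1 / α) ^ 2 / (Pt / (α ^ 2 * Pb ^ 2) + σ2 / (c * m)) ≤
        α * (1 - 1 / α) ^ 2 / (Pt / (α ^ 2 * Pb ^ 2) + σ2 / (cmax * m)) :=
      div_le_div_of_nonneg_left hnum hden2 hdle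
    have h2 : (1 - α) * c * m / σ2 ≤ (1 - α) * cmax * m / σ2 := by
      exact (div_le_div_iff_of_pos_right hσ2).mpr (by nlinarith [mul_nonneg (mul_nonneg (sub_nonneg.2 hαhi) (sub_nonneg.2 hcle)) hm.le])
    linarith
  -- Step 2: monotone decreasing in α
  have step2 : α * (1 - 1 / α) ^ 2 / (Pt / (α ^ 2 * Pb ^ 2) + σ2 / (cmax * m)) +
      (1 - α) * cmax * m / σ2 ≤
      αmin * (1 - 1 / αmin) ^ 2 / (Pt / (αmin ^ 2 * Pb ^ 2) + σ2 / (cmax * m)) +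
      (1 - αmin) * cmax * m / σ2 := by
    rw [hrw α hαpos, hrw αmin hb0]
    apply mul_le_mul_of_nonneg_left ?_ hspos.le
    exact aux_mono (Pb ^ 2) T hPb2 hTb αmin α hb0 hαlo hαhi
  linarith
end
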